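/- arXiv:2204.13673 — 2 statements merged into one kernel-verified Lean document; each statement's English description precedes it below -/
import Mathlib

section
/- For the Brinkmann metric G with smooth profile H : U → ℝ satisfying ∂_u H = 0, the Ricci tensor R_{ab} (defined by the stated coordinate formula) satisfies: R_{vv} = (1/2)(∂_x²H + ∂_y²H), and R_{ab} = 0 for every other pair of indices (a,b) ≠ (v,v). In particular, the Brinkmann metric is Ricci-flat if and only if H is harmonic in the transverse variables (x,y). -/
/- Background: Brinkmann coordinates (u,v,x,y) = indices (0,1,2,3) on ℝ⁴,
   pp-wave metric g = 2 du dv + H dv² - dx² - dy². -/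

noncomputable section

abbrev V4 : Type := Fin 4 → ℝ

/-- Partial derivative of a complex-valued function in coordinate direction `i`. -/
def pdC (i : Fin 4) (f : V4 → ℂ) : V4 → ℂ :=
  fun x => fderiv ℝ f x (Pi.single i 1)

/-- Partial derivative of a real-valued function in coordinate direction `i`. -/
def pdR (i : Fin 4) (f : V4 → ℝ) : V4 → ℝ :=
  fun x => fderiv ℝ f x (Pi.single i 1)

/-- Wirtinger derivative ∂_ζ = (∂_x - i ∂_y)/√2. -/
def pdZ (f : V4 → ℂ) : V4 → ℂ :=
  fun x => (pdC 2 f x - Complex.I * pdC 3 f x) / (Real.sqrt 2 : ℂ)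

/-- Wirtinger derivative ∂_ζ̄ = (∂_x + i ∂_y)/√2. -/
def pdZb (f : V4 → ℂ) : V4 → ℂ :=
  fun x => (pdC 2 f x + Complex.I * pdC 3 f x) / (Real.sqrt 2 : ℂ)

/-- The Brinkmann (pp-wave) metric matrix. -/
def brinkmann (H : V4 → ℝ) (x : V4) : Matrix (Fin 4) (Fin 4) ℝ :=
  !![0, 1, 0, 0; 1, H x, 0, 0; 0, 0, -1, 0; 0, 0, 0, -1]

/-- The inverse metric. -/
def gInv (H : V4 → ℝ) (x : V4) : Matrix (Fin 4) (Fin 4) ℝ := (brinkmann H x)⁻¹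

/-- Christoffel symbols Γ^c_{ab} of the Brinkmann metric. -/
def Gam (H : V4 → ℝ) (c a b : Fin 4) (x : V4) : ℝ :=
  (1/2) * ∑ d, gInv H x c d *
    (pdR a (fun y => brinkmann H y d b) x + pdR b (fun y => brinkmann H y d a) x
      - pdR d (fun y => brinkmann H y a b) x)

/-- Ricci tensor R_{ab} = Σ_c ∂_c Γ^c_{ab} − Σ_c ∂_a Γ^c_{cb}
      + Σ_{c,d}(Γ^c_{cd} Γ^d_{ab} − Γ^c_{ad} Γ^d_{cb}). -/
def ric (H : V4 → ℝ) (a b : Fin 4) (x : V4) : ℝ :=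
  (∑ c, pdR c (fun y => Gam H c a b y) x)
  - (∑ c, pdR a (fun y => Gam H c c b y) x)
  + ∑ c, ∑ d, (Gam H c c d x * Gam H d a b x - Gam H c a d x * Gam H d c b x)

/-- Wave operator □φ = Σ_{a,b} (G⁻¹)^{ab}(∂_a∂_b φ − Σ_c Γ^c_{ab} ∂_c φ). -/
def boxOp (H : V4 → ℝ) (φ : V4 → ℂ) (x : V4) : ℂ :=
  ∑ a, ∑ b, (gInv H x a b : ℂ) *
    (pdC a (pdC b φ) x - ∑ c, (Gam H c a b x : ℂ) * pdC c φ x)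

/-- Covariant derivative of a real one-form: ∇_a ω_b = ∂_a ω_b − Γ^c_{ab} ω_c. -/
def covD1R (H : V4 → ℝ) (ω : Fin 4 → V4 → ℝ) (a b : Fin 4) (x : V4) : ℝ :=
  pdR a (ω b) x - ∑ c, Gam H c a b x * ω c x

/-- Covariant derivative of a complex 2-tensor:
    ∇_c h_{ab} = ∂_c h_{ab} − Γ^d_{ca} h_{db} − Γ^d_{cb} h_{ad}. -/
def covD2C (H : V4 → ℝ) (h : Fin 4 → Fin 4 → V4 → ℂ) (c a b : Fin 4) (x : V4) : ℂ :=
  pdC c (h a b) x - (∑ d, (Gam H d c a x : ℂ) * h d b x)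
    - ∑ d, (Gam H d c b x : ℂ) * h a d x

/-- Covariant derivative of a complex 3-tensor. -/
def covD3C (H : V4 → ℝ) (T : Fin 4 → Fin 4 → Fin 4 → V4 → ℂ) (c d a b : Fin 4)
    (x : V4) : ℂ :=
  pdC c (T d a b) x - (∑ e, (Gam H e c d x : ℂ) * T e a b x)
    - (∑ e, (Gam H e c a x : ℂ) * T d e b x)
    - ∑ e, (Gam H e c b x : ℂ) * T d a e x

/-- Second covariant derivative (∇_c ∇_d h)_{ab} of a complex 2-tensor. -/
def DDh (H : V4 → ℝ) (h : Fin 4 → Fin 4 → V4 → ℂ) (c d a b : Fin 4) (x : V4) : ℂ :=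
  covD3C H (fun d a b => covD2C H h d a b) c d a b x

/-- Covariant Hessian of a complex scalar: ∇_a∇_b φ = ∂_a∂_b φ − Σ_c Γ^c_{ab} ∂_c φ. -/
def hessOp (H : V4 → ℝ) (φ : V4 → ℂ) (a b : Fin 4) (x : V4) : ℂ :=
  pdC a (pdC b φ) x - ∑ c, (Gam H c a b x : ℂ) * pdC c φ x

/-- Metric trace of a complex 2-tensor: Σ_{c,d} (G⁻¹)^{cd} h_{cd}. -/
def trOp (H : V4 → ℝ) (h : Fin 4 → Fin 4 → V4 → ℂ) : V4 → ℂ :=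
  fun x => ∑ c, ∑ d, (gInv H x c d : ℂ) * h c d x

/-- Linearized Ricci operator Ṙ[h]_{ab}. -/
def linRic (H : V4 → ℝ) (h : Fin 4 → Fin 4 → V4 → ℂ) (a b : Fin 4) (x : V4) : ℂ :=
  -(1/2) * ((∑ c, ∑ d, (gInv H x c d : ℂ) * DDh H h c d a b x)
    + hessOp H (trOp H h) a b x
    - (∑ c, ∑ d, (gInv H x c d : ℂ) * DDh H h c a b d x)
    - ∑ c, ∑ d, (gInv H x c d : ℂ) * DDh H h c b a d x)

/-- Components of the covector dv. -/
def dvC : Fin 4 → ℂ := ![0, 1, 0, 0]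

/-- Components of the covector dζ = (dx + i dy)/√2. -/
def dzC : Fin 4 → ℂ := ![0, 0, 1 / (Real.sqrt 2 : ℂ), Complex.I / (Real.sqrt 2 : ℂ)]

/-- The Hertz-potential tensor
    hᴴ[Φ] = (∂_ζ̄²Φ) dv⊗dv + (∂_u∂_ζ̄Φ)(dv⊗dζ + dζ⊗dv) + (∂_u²Φ) dζ⊗dζ. -/
def hertz (Φ : V4 → ℂ) (a b : Fin 4) (x : V4) : ℂ :=
  pdZb (pdZb Φ) x * dvC a * dvC b
    + pdC 0 (pdZb Φ) x * (dvC a * dzC b + dzC a * dvC b)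
    + pdC 0 (pdC 0 Φ) x * (dzC a * dzC b)

/-! Write `g = η + H k ⊗ k` with `η` flat and `k = dv`. Since `det g` is constant, the
trace `Γ^c_{cb}` vanishes identically. Where `∂_u H = 0` the `H`-dependent entry of `g⁻¹`
drops out and `Γ^c_{ab} = ½ η^{cd} (k_d k_b ∂_a H + k_d k_a ∂_b H - k_a k_b ∂_d H)` is linear
in `dH` with constant coefficients; all quadratic terms vanish because `k^c = η^{cd} k_d = ∂_u`
is null and `k^c ∂_c H = 0`. Hence `R_{ab} = ∂_c Γ^c_{ab} = ½ k_a k_b (∂_x² H + ∂_y² H)`. -/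

def dvR : Fin 4 → ℝ := ![0, 1, 0, 0]

def flatInv : Matrix (Fin 4) (Fin 4) ℝ := !![0, 1, 0, 0; 1, 0, 0, 0; 0, 0, -1, 0; 0, 0, 0, -1]

lemma gInv_eq (H : V4 → ℝ) (x : V4) :
    gInv H x = !![-H x, 1, 0, 0; 1, 0, 0, 0; 0, 0, -1, 0; 0, 0, 0, -1] := by
  rw [gInv, Matrix.inv_eq_right_inv]
  ext i j
  fin_cases i <;> fin_cases j <;> simp [brinkmann, Matrix.mul_apply, Fin.sum_univ_four]

lemma pdR_brinkmann (H : V4 → ℝ) (e d b : Fin 4) (x : V4) :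
    pdR e (fun y => brinkmann H y d b) x = dvR d * dvR b * pdR e H x := by
  fin_cases d <;> fin_cases b <;> simp [brinkmann, dvR, pdR]

/-- The Christoffel symbols where `∂_u H = 0`, as a linear function of `g = dH`. -/
def ppChristoffel (c a b : Fin 4) : (Fin 4 → ℝ) →ₗ[ℝ] ℝ where
  toFun g := (1/2) * ∑ d, flatInv c d *
    (dvR d * dvR b * g a + dvR d * dvR a * g b - dvR a * dvR b * g d)
  map_add' g g' := by
    simp only [Pi.add_apply, ← mul_add, ← Finset.sum_add_distrib]
    congr 1; refine Finset.sum_congr rfl fun d _ => by ring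
  map_smul' r g := by
    simp only [Pi.smul_apply, smul_eq_mul, RingHom.id_apply, Finset.mul_sum]
    refine Finset.sum_congr rfl fun d _ => by ring

lemma Gam_eq_ppChristoffel {H : V4 → ℝ} {x : V4} (hx : pdR 0 H x = 0) (c a b : Fin 4) :
    Gam H c a b x = ppChristoffel c a b (fun j => pdR j H x) := by
  simp only [Gam, pdR_brinkmann, ppChristoffel, LinearMap.coe_mk, AddHom.coe_mk]
  congr 1
  refine Finset.sum_congr rfl fun d _ => ?_
  fin_cases c <;> fin_cases d <;> simp [gInv_eq, flatInv, dvR, hx]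

lemma pdR_linearMap_comp (Φ : (Fin 4 → ℝ) →ₗ[ℝ] ℝ) {F : Fin 4 → V4 → ℝ} {x : V4}
    (hF : ∀ j, DifferentiableAt ℝ (F j) x) (e : Fin 4) :
    pdR e (fun y => Φ (fun j => F j y)) x = Φ (fun j => pdR e (F j) x) := by
  have hpi :
      HasFDerivAt (fun y j => F j y) (ContinuousLinearMap.pi fun j => fderiv ℝ (F j) x) x :=
    hasFDerivAt_pi.2 fun j => (hF j).hasFDerivAt
  exact congrArg (· (Pi.single e 1))
    ((LinearMap.toContinuousLinearMap Φ).hasFDerivAt.comp x hpi).fderiv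

lemma sum_ppChristoffel_self (g : Fin 4 → ℝ) (b : Fin 4) :
    ∑ c, ppChristoffel c c b g = 0 := by
  fin_cases b <;> simp [ppChristoffel, Fin.sum_univ_four, flatInv, dvR]

lemma sum_ppChristoffel_quadratic {g : Fin 4 → ℝ} (hg : g 0 = 0) (a b : Fin 4) :
    ∑ c, ∑ d, (ppChristoffel c c d g * ppChristoffel d a b g
      - ppChristoffel c a d g * ppChristoffel d c b g) = 0 := by
  fin_cases a <;> fin_cases b <;> simp [ppChristoffel, Fin.sum_univ_four, flatInv, dvR, hg]

lemma sum_ppChristoffel_divergence {h : Fin 4 → Fin 4 → ℝ} (hrow : ∀ j, h 0 j = 0)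
    (hcol : ∀ j, h j 0 = 0) (a b : Fin 4) :
    ∑ c, ppChristoffel c a b (h c) = if a = 1 ∧ b = 1 then (h 2 2 + h 3 3) / 2 else 0 := by
  fin_cases a <;> fin_cases b <;> simp [ppChristoffel, Fin.sum_univ_four, flatInv, dvR, hrow, hcol]
  ring

lemma pdR_pdR_comm {H : V4 → ℝ} {x : V4} (hH : ContDiffAt ℝ 2 H x) (i j : Fin 4) :
    pdR i (pdR j H) x = pdR j (pdR i H) x := by
  have hder : DifferentiableAt ℝ (fderiv ℝ H) x :=
    (hH.fderiv_right (m := 1) le_rfl).differentiableAt one_ne_zero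
  have hpd (i j : Fin 4) :
      pdR i (pdR j H) x = fderiv ℝ (fderiv ℝ H) x (Pi.single i 1) (Pi.single j 1) := by
    change fderiv ℝ (fun y => fderiv ℝ H y (Pi.single j 1)) x (Pi.single i 1) = _
    simp [fderiv_clm_apply hder (differentiableAt_const _)]
  rw [hpd, hpd]
  exact hH.isSymmSndFDerivAt (by simp) _ _

lemma differentiableAt_pdR {H : V4 → ℝ} {x : V4} (hH : ContDiffAt ℝ 2 H x) (j : Fin 4) :
    DifferentiableAt ℝ (pdR j H) x :=
  ((hH.fderiv_right (m := 1) le_rfl).differentiableAt one_ne_zero).clm_apply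
    (differentiableAt_const _)

theorem ric_brinkmann_eq {H : V4 → ℝ} {x : V4} (hH : ContDiffAt ℝ 2 H x)
    (hHu : pdR 0 H =ᶠ[nhds x] 0) (a b : Fin 4) :
    ric H a b x = if a = 1 ∧ b = 1 then (pdR 2 (pdR 2 H) x + pdR 3 (pdR 3 H) x) / 2 else 0 := by
  have hpdGam (e c a b : Fin 4) :
      pdR e (fun y => Gam H c a b y) x = ppChristoffel c a b (fun j => pdR e (pdR j H) x) := by
    have hGam : (fun y => Gam H c a b y) =ᶠ[nhds x]
        fun y => ppChristoffel c a b (fun j => pdR j H y) :=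
      hHu.mono fun y hy => Gam_eq_ppChristoffel hy c a b
    rw [pdR, hGam.fderiv_eq]
    exact pdR_linearMap_comp _ (differentiableAt_pdR hH) e
  have hcol (j : Fin 4) : pdR j (pdR 0 H) x = 0 := by
    simp [pdR, hHu.fderiv_eq]
  have hrow (j : Fin 4) : pdR 0 (pdR j H) x = 0 := (pdR_pdR_comm hH 0 j).trans (hcol j)
  have hgrad : (fun j => pdR j H x) 0 = 0 := hHu.self_of_nhds
  simp only [ric, hpdGam, Gam_eq_ppChristoffel hgrad]
  rw [sum_ppChristoffel_quadratic hgrad,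
    sum_ppChristoffel_divergence (h := fun c j => pdR c (pdR j H) x) hrow hcol]
  simp [sum_ppChristoffel_self]

/-- The Ricci tensor of the Brinkmann metric: only R_vv = (1/2)(∂_x²H+∂_y²H) is
possibly nonzero; Ricci-flat iff H is transversally harmonic. -/
theorem stmt1 (U : Set V4) (hUopen : IsOpen U)
    (H : V4 → ℝ) (hH : ContDiffOn ℝ (⊤ : ℕ∞) H U)
    (hHu : ∀ x ∈ U, pdR 0 H x = 0) :
    (∀ x ∈ U, ric H 1 1 x = (1/2) * (pdR 2 (pdR 2 H) x + pdR 3 (pdR 3 H) x)) ∧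
    (∀ x ∈ U, ∀ a b : Fin 4, (a, b) ≠ ((1 : Fin 4), (1 : Fin 4)) → ric H a b x = 0) ∧
    ((∀ x ∈ U, ∀ a b : Fin 4, ric H a b x = 0) ↔
      (∀ x ∈ U, pdR 2 (pdR 2 H) x + pdR 3 (pdR 3 H) x = 0)) := by
  have hric (x : V4) (hx : x ∈ U) (a b : Fin 4) : ric H a b x =
      if a = 1 ∧ b = 1 then (pdR 2 (pdR 2 H) x + pdR 3 (pdR 3 H) x) / 2 else 0 :=
    ric_brinkmann_eq
      ((hH.contDiffAt (hUopen.mem_nhds hx)).of_le (WithTop.coe_le_coe.mpr le_top))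
      (Filter.eventually_of_mem (hUopen.mem_nhds hx) hHu) a b
  refine ⟨fun x hx => ?_, fun x hx a b hab => ?_, fun h x hx => ?_, fun h x hx a b => ?_⟩
  · rw [hric x hx, if_pos ⟨rfl, rfl⟩]
    ring
  · rw [hric x hx, if_neg (by simpa [Prod.ext_iff] using hab)]
  · simpa [hric x hx] using h x hx 1 1
  · simp [hric x hx, h x hx]
end
end

section
/- For the Brinkmann metric G with smooth profile H : U → ℝ satisfying ∂_u H = 0, the only possibly nonzero Christoffel symbols are Γ^u_{vv} = (1/2)∂_v H, Γ^u_{vx} = Γ^u_{xv} = (1/2)∂_x H, Γ^u_{vy} = Γ^u_{yv} = (1/2)∂_y H, Γ^x_{vv} = (1/2)∂_x H, Γ^y_{vv} = (1/2)∂_y H. Consequently Γ^c_{ab} = 0 whenever a = u or b = u, so the coordinate vector field ∂_u is covariantly constant (∇_a(∂_u)^c = Γ^c_{au} = 0) and null (G(∂_u,∂_u) = 0): the Brinkmann metric admits a parallel null vector field. -/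
/- Background: Brinkmann coordinates (u,v,x,y) = indices (0,1,2,3) on ℝ⁴,
   pp-wave metric g = 2 du dv + H dv² - dx² - dy². -/

noncomputable section

lemma pdR_const (a : Fin 4) (c : ℝ) (x : V4) : pdR a (fun _ => c) x = 0 := by
  simp [pdR]

set_option maxHeartbeats 1000000 in
lemma Gam_key (H : V4 → ℝ) (x : V4) (h0 : pdR 0 H x = 0) : ∀ c a b : Fin 4,
      (c, a, b) ≠ ((0 : Fin 4), (1 : Fin 4), (1 : Fin 4)) →
      (c, a, b) ≠ ((0 : Fin 4), (1 : Fin 4), (2 : Fin 4)) →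
      (c, a, b) ≠ ((0 : Fin 4), (2 : Fin 4), (1 : Fin 4)) →
      (c, a, b) ≠ ((0 : Fin 4), (1 : Fin 4), (3 : Fin 4)) →
      (c, a, b) ≠ ((0 : Fin 4), (3 : Fin 4), (1 : Fin 4)) →
      (c, a, b) ≠ ((2 : Fin 4), (1 : Fin 4), (1 : Fin 4)) →
      (c, a, b) ≠ ((3 : Fin 4), (1 : Fin 4), (1 : Fin 4)) →
      Gam H c a b x = 0 := by
  intro c a b h1 h2 h3 h4 h5 h6 h7
  fin_cases c <;> fin_cases a <;> fin_cases b <;>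
    first
    | exact absurd rfl h1 | exact absurd rfl h2 | exact absurd rfl h3
    | exact absurd rfl h4 | exact absurd rfl h5 | exact absurd rfl h6
    | exact absurd rfl h7
    | simp [Gam, gInv_eq, Fin.sum_univ_four, brinkmann, pdR_const,
        Matrix.vecHead, Matrix.vecTail, h0]

set_option maxHeartbeats 800000 in
lemma Gam_nonzero (H : V4 → ℝ) (x : V4) (h0 : pdR 0 H x = 0) :
      Gam H 0 1 1 x = (1/2) * pdR 1 H x ∧
      Gam H 0 1 2 x = (1/2) * pdR 2 H x ∧
      Gam H 0 2 1 x = (1/2) * pdR 2 H x ∧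
      Gam H 0 1 3 x = (1/2) * pdR 3 H x ∧
      Gam H 0 3 1 x = (1/2) * pdR 3 H x ∧
      Gam H 2 1 1 x = (1/2) * pdR 2 H x ∧
      Gam H 3 1 1 x = (1/2) * pdR 3 H x := by
  refine ⟨?_, ?_, ?_, ?_, ?_, ?_, ?_⟩ <;>
    simp [Gam, gInv_eq, Fin.sum_univ_four, brinkmann, pdR_const,
      Matrix.vecHead, Matrix.vecTail, h0]

/-- Christoffel symbols of the Brinkmann metric: explicit nonzero components,
all others vanish; ∂_u is parallel and null. -/
theorem stmt2 (U : Set V4) (hUopen : IsOpen U)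
    (H : V4 → ℝ) (hH : ContDiffOn ℝ (⊤ : ℕ∞) H U)
    (hHu : ∀ x ∈ U, pdR 0 H x = 0) :
    (∀ x ∈ U,
      Gam H 0 1 1 x = (1/2) * pdR 1 H x ∧
      Gam H 0 1 2 x = (1/2) * pdR 2 H x ∧
      Gam H 0 2 1 x = (1/2) * pdR 2 H x ∧
      Gam H 0 1 3 x = (1/2) * pdR 3 H x ∧
      Gam H 0 3 1 x = (1/2) * pdR 3 H x ∧
      Gam H 2 1 1 x = (1/2) * pdR 2 H x ∧
      Gam H 3 1 1 x = (1/2) * pdR 3 H x) ∧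
    (∀ x ∈ U, ∀ c a b : Fin 4,
      (c, a, b) ≠ ((0 : Fin 4), (1 : Fin 4), (1 : Fin 4)) →
      (c, a, b) ≠ ((0 : Fin 4), (1 : Fin 4), (2 : Fin 4)) →
      (c, a, b) ≠ ((0 : Fin 4), (2 : Fin 4), (1 : Fin 4)) →
      (c, a, b) ≠ ((0 : Fin 4), (1 : Fin 4), (3 : Fin 4)) →
      (c, a, b) ≠ ((0 : Fin 4), (3 : Fin 4), (1 : Fin 4)) →
      (c, a, b) ≠ ((2 : Fin 4), (1 : Fin 4), (1 : Fin 4)) →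
      (c, a, b) ≠ ((3 : Fin 4), (1 : Fin 4), (1 : Fin 4)) →
      Gam H c a b x = 0) ∧
    (∀ x ∈ U, ∀ c a b : Fin 4, (a = 0 ∨ b = 0) → Gam H c a b x = 0) ∧
    (∀ x ∈ U, ∀ a c : Fin 4, Gam H c a 0 x = 0) ∧
    (∀ x ∈ U, brinkmann H x 0 0 = 0) := by
  have key := fun x hx => Gam_key H x (hHu x hx)
  refine ⟨fun x hx => Gam_nonzero H x (hHu x hx), key, ?_, ?_, fun x _ => by simp [brinkmann]⟩
  · intro x hx c a b hab
    rcases hab with rfl | rfl <;>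
      exact key x hx _ _ _ (by simp [Prod.ext_iff]) (by simp [Prod.ext_iff])
        (by simp [Prod.ext_iff]) (by simp [Prod.ext_iff]) (by simp [Prod.ext_iff])
        (by simp [Prod.ext_iff]) (by simp [Prod.ext_iff])
  · intro x hx a c
    exact key x hx _ _ _ (by simp [Prod.ext_iff]) (by simp [Prod.ext_iff])
      (by simp [Prod.ext_iff]) (by simp [Prod.ext_iff]) (by simp [Prod.ext_iff])
      (by simp [Prod.ext_iff]) (by simp [Prod.ext_iff])
end
end
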